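/- For every n ≥ 0, the identity ∑_{λ ⊢ n} ∑_{P ∈ SYT(λ)} t^{n(λ)} · ∏_{i=1}^{n} α_{P^{(i)}/P^{(i−1)}}(q,t) = 1 holds in ℚ(q,t), where the outer sum is over all partitions λ of n and the inner sum is over all standard Young tableaux of shape λ. -/

import Mathlib

open Finset

noncomputable section

/-- The field `ℚ(q,t)` of rational functions in two variables over `ℚ`. -/
abbrev K : Type := FractionRing (MvPolynomial (Fin 2) ℚ)

def q : K := algebraMap (MvPolynomial (Fin 2) ℚ) K (MvPolynomial.X 0)
def t : K := algebraMap (MvPolynomial (Fin 2) ℚ) K (MvPolynomial.X 1)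

/-- Arm-length of the cell `c = (row, col)` of `κ` (cells are 0-indexed, Mathlib convention). -/
def arm (κ : YoungDiagram) (c : ℕ × ℕ) : ℕ := κ.rowLen c.1 - c.2 - 1

/-- Leg-length of the cell `c = (row, col)` of `κ`. -/
def leg (κ : YoungDiagram) (c : ℕ × ℕ) : ℕ := κ.colLen c.2 - c.1 - 1

/-- Hook-length of the cell `c` of `κ`. -/
def hook (κ : YoungDiagram) (c : ℕ × ℕ) : ℕ := arm κ c + leg κ c + 1

/-- `Covers μ λ` means `μ ⋖ λ` in Young's lattice. -/
def Covers (μ l : YoungDiagram) : Prop :=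
  μ.cells ⊆ l.cells ∧ l.cells.card = μ.cells.card + 1

open scoped Classical in
/-- For `μ ⋖ λ`, the set `R_{λ/μ}` of cells of `μ` in the same row as the unique cell of `λ/μ`. -/
def Rset (μ l : YoungDiagram) : Finset (ℕ × ℕ) :=
  μ.cells.filter fun c => ∃ d ∈ l.cells \ μ.cells, c.1 = d.1

open scoped Classical in
/-- For `μ ⋖ λ`, the set `C_{λ/μ}` of cells of `μ` in the same column as the unique cell of `λ/μ`. -/
def Cset (μ l : YoungDiagram) : Finset (ℕ × ℕ) :=
  μ.cells.filter fun c => ∃ d ∈ l.cells \ μ.cells, c.2 = d.2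

/-- `[i,j] = 1 - q^i t^j`. -/
def brk (i j : ℕ) : K := 1 - q ^ i * t ^ j

/-- `b_κ(c) = (1 - q^{a} t^{ℓ+1})/(1 - q^{a+1} t^{ℓ})`. -/
def bcell (κ : YoungDiagram) (c : ℕ × ℕ) : K :=
  brk (arm κ c) (leg κ c + 1) / brk (arm κ c + 1) (leg κ c)

/-- `ψ_{λ/μ}(q,t)` for `μ ⋖ λ`. -/
def ψqt (μ l : YoungDiagram) : K := ∏ c ∈ Rset μ l, bcell μ c / bcell l c

/-- `φ_{λ/μ}(q,t)` for `μ ⋖ λ`. -/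
def φqt (μ l : YoungDiagram) : K :=
  ((1 - t) / (1 - q)) * ∏ c ∈ Cset μ l, bcell l c / bcell μ c

/-- `α_{ν/λ}(q,t)` for `λ ⋖ ν`. -/
def alph (l ν : YoungDiagram) : K :=
  (∏ c ∈ Rset l ν, brk (arm l c) (leg l c + 1) / brk (arm ν c) (leg ν c + 1)) *
  (∏ c ∈ Cset l ν, brk (arm l c + 1) (leg l c) / brk (arm ν c + 1) (leg ν c))

/-- `ᾱ_{ν/λ}(q,t)` for `λ ⋖ ν`. -/
def alphBar (l ν : YoungDiagram) : K :=
  (∏ c ∈ Rset l ν, brk (arm l c + 1) (leg l c) / brk (arm ν c + 1) (leg ν c)) *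
  (∏ c ∈ Cset l ν, brk (arm l c) (leg l c + 1) / brk (arm ν c) (leg ν c + 1))

/-- `n(κ) = ∑_{c ∈ κ} ℓ_κ(c)` (as an integer). -/
def nstat (κ : YoungDiagram) : ℤ := ∑ c ∈ κ.cells, (leg κ c : ℤ)

/-- `n'(κ) = ∑_{c ∈ κ} a_κ(c)` (as an integer). -/
def nstat' (κ : YoungDiagram) : ℤ := ∑ c ∈ κ.cells, (arm κ c : ℤ)


/-- `P : ℕ → YoungDiagram` encodes a standard Young tableau of shape `l ⊢ n`, viewed as a
saturated chain `∅ = P⁰ ⋖ P¹ ⋖ ⋯ ⋖ Pⁿ = l` in Young's lattice (padded constantly beyond `n`). -/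
def IsSYTChain (n : ℕ) (l : YoungDiagram) (P : ℕ → YoungDiagram) : Prop :=
  (P 0).cells = ∅ ∧ (∀ i < n, Covers (P i) (P (i + 1))) ∧ ∀ i, n ≤ i → P i = l

/-!
Removing the last cell of a chain reduces the identity for `n + 1` to the one for `n`, given two
facts about a diagram `μ` (rows indexed from `0`): adding a cell in row `r` raises `n(μ)` by `r`,
and `∑_r t^r α_{μ+r/μ} = 1`, the sum running over the rows `r` that can receive a cell.

For the latter, let `ℓ` be the number of rows of `μ`, `x_ρ = q^{μ_ρ} t^{-ρ}` for `ρ ≤ ℓ` and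
`z_y = q^{μ_y} t^{-(y+1)}` for `y < ℓ`. The products defining `α_{μ+r/μ}` telescope along the
boundary of `μ` to `t^r α_{μ+r/μ} = ∏_y (1 - x_r/z_y) / ∏_{ρ ≠ r} (1 - x_r/x_ρ)`, and the
right-hand side vanishes when row `r` cannot receive a cell, since then `x_r = z_{r-1}`. Summed
over all `ρ ≤ ℓ` these terms give `1`: this is Lagrange interpolation at `0`, on the `ℓ + 1` nodes
`x_ρ`, of the polynomial `∏_y (1 - X/z_y)` of degree `ℓ`.
-/

namespace Finset

theorem prod_Ico_div_of_ne_zero {G : Type*} [CommGroupWithZero G] {f : ℕ → G}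
    (hf : ∀ i, f i ≠ 0) {m n : ℕ} (hmn : m ≤ n) : ∏ i ∈ Ico m n, f (i + 1) / f i = f n / f m := by
  simpa using congrArg Units.val (prod_Ico_div (fun i => Units.mk0 (f i) (hf i)) hmn)

theorem prod_range_eq_prod_Ico_prod_Ico {M : Type*} [CommMonoid M] (f : ℕ → M)
    {L : ℕ → ℕ} (hL : Antitone L) {r N : ℕ} (hrN : r ≤ N) (hN : L N = 0) :
    ∏ x ∈ range (L r), f x = ∏ y ∈ Ico r N, ∏ x ∈ Ico (L (y + 1)) (L y), f x := by
  induction hrN using Nat.decreasingInduction with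
  | self => simp [hN]
  | of_succ r hr ih =>
    rw [prod_eq_prod_Ico_succ_bot hr, ← ih, mul_comm, prod_range_mul_prod_Ico _ (hL r.le_succ)]

theorem prod_erase_range_succ {M : Type*} [CommMonoid M] (f : ℕ → M) {r N : ℕ} (h : r ≤ N) :
    ∏ i ∈ (range (N + 1)).erase r, f i = (∏ i ∈ range r, f i) * ∏ i ∈ Ico r N, f (i + 1) := by
  induction N, h using Nat.le_induction with
  | base => rw [range_add_one, erase_insert notMem_range_self, Ico_self, prod_empty, mul_one]
  | succ N hrN ih =>
    rw [range_add_one, erase_insert_of_ne (by omega), prod_insert (by simp), ih,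
      prod_Ico_succ_top hrN, mul_left_comm, mul_comm (f _)]

end Finset

open Polynomial in
theorem Lagrange.sum_prod_one_sub_div_div_prod_one_sub_div_eq_one {F ι κ : Type*} [Field F]
    [DecidableEq ι] {s : Finset ι} {v : ι → F} (hvs : Set.InjOn v s) (hv : ∀ i ∈ s, v i ≠ 0)
    (T : Finset κ) (w : κ → F) (hT : #T < #s) :
    ∑ i ∈ s, (∏ b ∈ T, (1 - v i / w b)) / ∏ j ∈ s.erase i, (1 - v i / v j) = 1 := by
  set f : F[X] := ∏ b ∈ T, (1 - C (w b)⁻¹ * X)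
  have hdeg : f.degree < #s := by
    refine lt_of_le_of_lt (degree_le_of_natDegree_le ?_) (by exact_mod_cast hT)
    calc f.natDegree ≤ ∑ b ∈ T, (1 - C (w b)⁻¹ * X).natDegree := natDegree_prod_le _ _
      _ ≤ ∑ _b ∈ T, 1 := by gcongr; compute_degree
      _ = #T := by simp
  have heval := congrArg (eval 0) (Lagrange.eq_interpolate hvs hdeg)
  rw [Lagrange.interpolate_apply, eval_finsetSum] at heval
  simp only [f, eval_prod, eval_sub, eval_one, eval_mul, eval_C, eval_X, mul_zero, sub_zero,
    prod_const_one, Lagrange.basis, Lagrange.basisDivisor] at heval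
  refine (sum_congr rfl fun i hi => ?_).trans heval.symm
  rw [div_eq_mul_inv, ← prod_inv_distrib]
  congr 1
  · exact prod_congr rfl fun b _ => by ring
  · refine prod_congr rfl fun j hj => ?_
    have hji : v j ≠ v i := fun h => (mem_erase.1 hj).1 (hvs (mem_of_mem_erase hj) hi h)
    have := hv j (mem_of_mem_erase hj)
    have := sub_ne_zero.2 hji
    have := sub_ne_zero.2 hji.symm
    field_simp
    ring

theorem q_ne_zero : q ≠ 0 :=
  (map_ne_zero_iff _ (IsFractionRing.injective _ K)).2 (MvPolynomial.X_ne_zero 0)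

theorem t_ne_zero : t ≠ 0 :=
  (map_ne_zero_iff _ (IsFractionRing.injective _ K)).2 (MvPolynomial.X_ne_zero 1)

theorem q_pow_mul_t_pow_inj {a b c d : ℕ} : q ^ a * t ^ b = q ^ c * t ^ d ↔ a = c ∧ b = d := by
  refine ⟨fun h => ?_, by rintro ⟨rfl, rfl⟩; rfl⟩
  have hmon : ∀ i j : ℕ, q ^ i * t ^ j = algebraMap (MvPolynomial (Fin 2) ℚ) K
      (MvPolynomial.monomial (Finsupp.single 0 i + Finsupp.single 1 j) 1) := fun i j => by
    simp [q, t, ← MvPolynomial.X_pow_eq_monomial, MvPolynomial.monomial_add_single]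
  rw [hmon, hmon] at h
  have := MvPolynomial.monomial_left_injective one_ne_zero (IsFractionRing.injective _ K h)
  exact ⟨by simpa using DFunLike.congr_fun this 0, by simpa using DFunLike.congr_fun this 1⟩

theorem brk_ne_zero {i j : ℕ} (h : i ≠ 0 ∨ j ≠ 0) : brk i j ≠ 0 := by
  rw [brk, sub_ne_zero]
  intro hij
  have := q_pow_mul_t_pow_inj.1 (show q ^ 0 * t ^ 0 = q ^ i * t ^ j by simpa using hij)
  omega

def qtNode (a b : ℕ) : K := q ^ a / t ^ b

theorem qtNode_ne_zero (a b : ℕ) : qtNode a b ≠ 0 :=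
  div_ne_zero (pow_ne_zero _ q_ne_zero) (pow_ne_zero _ t_ne_zero)

theorem qtNode_inj {a b c d : ℕ} : qtNode a b = qtNode c d ↔ a = c ∧ b = d := by
  rw [qtNode, qtNode, div_eq_div_iff (pow_ne_zero _ t_ne_zero) (pow_ne_zero _ t_ne_zero),
    q_pow_mul_t_pow_inj, eq_comm (a := d)]

theorem brk_sub_sub {a b c r : ℕ} (ha : a ≤ c) (hb : r ≤ b) :
    brk (c - a) (b - r) = 1 - qtNode c r / qtNode a b := by
  have := pow_ne_zero a q_ne_zero
  have := pow_ne_zero r t_ne_zero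
  rw [brk, qtNode, qtNode, pow_sub₀ _ q_ne_zero ha, pow_sub₀ _ t_ne_zero hb]
  field_simp

theorem t_mul_brk_div_brk {v c i r : ℕ} (hc : c ≤ v) (hi : i < r) :
    t * (brk (v - c) (r - (i + 1)) / brk (v - c) (r - i)) =
      (1 - qtNode c r / qtNode v (i + 1)) / (1 - qtNode c r / qtNode v i) := by
  have := qtNode_ne_zero c r
  have := qtNode_ne_zero v i
  have := t_ne_zero
  have hsucc : qtNode v (i + 1) = qtNode v i / t := by
    rw [qtNode, qtNode, pow_succ]
    field_simp
  rw [brk_sub_sub hc hi.le, brk_sub_sub hc hi, hsucc]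
  field_simp
  rw [← neg_sub (qtNode v i), ← neg_sub (qtNode v i), neg_div_neg_eq]

namespace YoungDiagram

variable {μ ν : YoungDiagram} {r : ℕ}

theorem rowLen_eq_of_mem_iff {i k : ℕ} (h : ∀ j, (i, j) ∈ μ ↔ j < k) : μ.rowLen i = k :=
  le_antisymm (not_lt.1 fun hk => (h k).1 (mem_iff_lt_rowLen.2 hk) |>.false)
    (not_lt.1 fun hk => (mem_iff_lt_rowLen.1 ((h _).2 hk)).false)

theorem colLen_eq_of_mem_iff {j k : ℕ} (h : ∀ i, (i, j) ∈ μ ↔ i < k) : μ.colLen j = k :=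
  le_antisymm (not_lt.1 fun hk => (h k).1 (mem_iff_lt_colLen.2 hk) |>.false)
    (not_lt.1 fun hk => (mem_iff_lt_colLen.1 ((h _).2 hk)).false)

theorem mk_rowLen_notMem (μ : YoungDiagram) (r : ℕ) : (r, μ.rowLen r) ∉ μ :=
  fun h => (mem_iff_lt_rowLen.1 h).false

theorem rowLen_colLen_zero (μ : YoungDiagram) : μ.rowLen (μ.colLen 0) = 0 :=
  Nat.eq_zero_of_not_pos fun h => (mem_iff_lt_colLen.1 (mem_iff_lt_rowLen.2 h)).false

theorem colLen_eq_succ {x y : ℕ} (h₁ : μ.rowLen (y + 1) ≤ x) (h₂ : x < μ.rowLen y) :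
    μ.colLen x = y + 1 :=
  colLen_eq_of_mem_iff fun i => by
    rw [mem_iff_lt_rowLen]
    constructor
    · intro hi
      by_contra! hyi
      exact (μ.rowLen_anti _ _ hyi).trans h₁ |>.not_gt hi
    · exact fun hi => h₂.trans_le (μ.rowLen_anti _ _ (by omega))

def Addable (μ : YoungDiagram) (r : ℕ) : Prop :=
  r = 0 ∨ μ.rowLen r < μ.rowLen (r - 1)

instance (μ : YoungDiagram) : DecidablePred μ.Addable :=
  fun _ => inferInstanceAs (Decidable (_ ∨ _))

theorem Addable.rowLen_lt (h : μ.Addable r) {i : ℕ} (hi : i < r) : μ.rowLen r < μ.rowLen i := by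
  rcases h with h | h
  · omega
  · exact h.trans_le (μ.rowLen_anti _ _ (by omega))

theorem Addable.le_colLen_zero (h : μ.Addable r) : r ≤ μ.colLen 0 := by
  rcases Nat.eq_zero_or_pos r with rfl | hr
  · exact Nat.zero_le _
  · have : r - 1 < μ.colLen 0 :=
      mem_iff_lt_colLen.1 (mem_iff_lt_rowLen.2 (Nat.zero_lt_of_lt (h.rowLen_lt (by omega))))
    omega

theorem Addable.colLen_rowLen (h : μ.Addable r) : μ.colLen (μ.rowLen r) = r :=
  colLen_eq_of_mem_iff fun i => by
    rw [mem_iff_lt_rowLen]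
    constructor
    · intro hi
      by_contra! hri
      exact (μ.rowLen_anti _ _ hri).not_gt hi
    · exact h.rowLen_lt

/-- The smallest Young diagram containing `μ` and the cell at the end of row `r`; it has exactly one
cell more than `μ` only when `r` is addable. -/
def addCell (μ : YoungDiagram) (r : ℕ) : YoungDiagram :=
  μ ⊔ ⟨Iic (r, μ.rowLen r), by simpa using isLowerSet_Iic (r, μ.rowLen r)⟩

theorem mem_addCell (h : μ.Addable r) {x : ℕ × ℕ} :
    x ∈ μ.addCell r ↔ x = (r, μ.rowLen r) ∨ x ∈ μ := by
  obtain ⟨i, j⟩ := x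
  simp only [addCell, mem_sup, mem_mk, mem_Iic, Prod.mk_le_mk, Prod.mk.injEq]
  constructor
  · rintro (hx | ⟨hi, hj⟩)
    · exact Or.inr hx
    · rw [mem_iff_lt_rowLen]
      rcases hi.lt_or_eq with hi | rfl
      · exact Or.inr (hj.trans_lt (h.rowLen_lt hi))
      · omega
  · rintro (⟨rfl, rfl⟩ | hx)
    · exact Or.inr ⟨le_rfl, le_rfl⟩
    · exact Or.inl hx

theorem cells_addCell (h : μ.Addable r) :
    (μ.addCell r).cells = insert (r, μ.rowLen r) μ.cells := by
  ext x
  simp [mem_addCell h]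

theorem sdiff_addCell (h : μ.Addable r) :
    (μ.addCell r).cells \ μ.cells = {(r, μ.rowLen r)} := by
  rw [cells_addCell h, insert_sdiff_cancel (by simpa using μ.mk_rowLen_notMem r)]

theorem rowLen_addCell (h : μ.Addable r) (i : ℕ) :
    (μ.addCell r).rowLen i = if i = r then μ.rowLen r + 1 else μ.rowLen i :=
  rowLen_eq_of_mem_iff fun j => by
    rw [mem_addCell h, mem_iff_lt_rowLen, Prod.mk.injEq]
    split_ifs with hi
    · subst hi
      omega
    · simp [hi]

theorem colLen_addCell (h : μ.Addable r) (j : ℕ) :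
    (μ.addCell r).colLen j = if j = μ.rowLen r then r + 1 else μ.colLen j :=
  colLen_eq_of_mem_iff fun i => by
    rw [mem_addCell h, mem_iff_lt_colLen, Prod.mk.injEq]
    split_ifs with hj
    · subst hj
      rw [h.colLen_rowLen]
      omega
    · simp [hj]

theorem covers_addCell (h : μ.Addable r) : Covers μ (μ.addCell r) := by
  rw [Covers, cells_addCell h, card_insert_of_notMem (by simpa using μ.mk_rowLen_notMem r)]
  exact ⟨subset_insert _ _, rfl⟩

theorem exists_addable_of_covers (h : Covers μ ν) : ∃ r, μ.Addable r ∧ ν = μ.addCell r := by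
  obtain ⟨hsub, hcard⟩ := h
  obtain ⟨⟨r, j⟩, hd⟩ : ∃ d, ν.cells \ μ.cells = {d} :=
    card_eq_one.1 (by rw [card_sdiff_of_subset hsub, hcard]; omega)
  have hν : ∀ x ∈ ν, x = (r, j) ∨ x ∈ μ := fun x hx => by
    by_cases hxμ : x ∈ μ
    · exact Or.inr hxμ
    · exact Or.inl (mem_singleton.1 (hd ▸ mem_sdiff.2 ⟨(mem_cells x).2 hx, by rwa [mem_cells]⟩))
  have hrj : (r, j) ∈ ν ∧ (r, j) ∉ μ := by
    simpa using (hd ▸ mem_singleton_self _ : (r, j) ∈ ν.cells \ μ.cells)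
  obtain rfl : μ.rowLen r = j := by
    have hle : μ.rowLen r ≤ j := not_lt.1 fun hlt => hrj.2 (mem_iff_lt_rowLen.2 hlt)
    rcases hν _ (ν.up_left_mem le_rfl hle hrj.1) with h | h
    · simpa using h
    · exact absurd h (μ.mk_rowLen_notMem r)
  have hadd : μ.Addable r := by
    refine or_iff_not_imp_left.2 fun hr => mem_iff_lt_rowLen.1 ?_
    rcases hν _ (ν.up_left_mem (Nat.sub_le r 1) le_rfl hrj.1) with h | h
    · simp only [Prod.mk.injEq, and_true] at h
      omega
    · exact h
  refine ⟨r, hadd, YoungDiagram.ext ?_⟩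
  rw [cells_addCell hadd, ← union_sdiff_of_subset hsub, hd, union_comm]
  rfl

theorem addCell_injOn : Set.InjOn μ.addCell {r | μ.Addable r} := fun r h r' h' heq => by
  have : (r, μ.rowLen r) ∈ μ.addCell r' := heq ▸ (mem_addCell h).2 (Or.inl rfl)
  rcases (mem_addCell h').1 this with h | h
  · exact congrArg Prod.fst h
  · exact absurd h (μ.mk_rowLen_notMem r)

def addableRows (μ : YoungDiagram) : Finset ℕ :=
  {r ∈ range (μ.colLen 0 + 1) | μ.Addable r}

theorem mem_addableRows : r ∈ μ.addableRows ↔ μ.Addable r := by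
  simpa [addableRows] using fun h => Nat.lt_succ_of_le h.le_colLen_zero

theorem nstat_addCell (h : μ.Addable r) : nstat (μ.addCell r) = nstat μ + r := by
  have hleg : ∀ x ∈ μ.cells,
      (leg (μ.addCell r) x : ℤ) = leg μ x + if x.2 = μ.rowLen r then 1 else 0 := by
    rintro ⟨i, j⟩ hx
    have := mem_iff_lt_colLen.1 ((mem_cells _).1 hx)
    simp only [leg, colLen_addCell h]
    split_ifs with hj
    · subst hj
      rw [h.colLen_rowLen] at this ⊢
      omega
    · omega
  have hcol : #{x ∈ μ.cells | x.2 = μ.rowLen r} = r := by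
    conv_rhs => rw [← h.colLen_rowLen, colLen_eq_card]
    rfl
  rw [nstat, cells_addCell h, sum_insert (by simpa using μ.mk_rowLen_notMem r),
    sum_congr rfl hleg, sum_add_distrib, sum_boole, hcol, ← nstat]
  simp [leg, colLen_addCell h]

theorem Rset_addCell (h : μ.Addable r) : Rset μ (μ.addCell r) = μ.row r := by
  ext c
  simp [Rset, row, sdiff_addCell h]

theorem Cset_addCell (h : μ.Addable r) : Cset μ (μ.addCell r) = μ.col (μ.rowLen r) := by
  ext c
  simp [Cset, col, sdiff_addCell h]

theorem alph_addCell (h : μ.Addable r) :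
    alph μ (μ.addCell r) =
      (∏ x ∈ range (μ.rowLen r), brk (μ.rowLen r - (x + 1)) (μ.colLen x - r) /
        brk (μ.rowLen r - x) (μ.colLen x - r)) *
      ∏ y ∈ range r, brk (μ.rowLen y - μ.rowLen r) (r - (y + 1)) /
        brk (μ.rowLen y - μ.rowLen r) (r - y) := by
  rw [alph, Rset_addCell h, Cset_addCell h, row_eq_prod, col_eq_prod, h.colLen_rowLen,
    prod_product, prod_singleton, prod_product]
  simp only [prod_singleton]
  congr 1
  · refine prod_congr rfl fun x hx => ?_
    have hx := mem_range.1 hx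
    have := mem_iff_lt_colLen.1 (mem_iff_lt_rowLen.2 hx)
    simp only [arm, leg, rowLen_addCell h, colLen_addCell h, if_pos, if_neg hx.ne]
    congr 2 <;> omega
  · refine prod_congr rfl fun y hy => ?_
    have hy := mem_range.1 hy
    have := h.rowLen_lt hy
    simp only [arm, leg, rowLen_addCell h, colLen_addCell h, if_pos, if_neg hy.ne, h.colLen_rowLen]
    congr 2 <;> omega

/-- `x_ρ = q^{μ_ρ} t^{-ρ}`, attached to the outer corner of row `ρ` when `ρ` is addable. -/
def addNode (μ : YoungDiagram) (ρ : ℕ) : K := qtNode (μ.rowLen ρ) ρ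

/-- `z_y = q^{μ_y} t^{-(y+1)}`, attached to the inner corner above row `y` when `μ_{y+1} < μ_y`;
otherwise it equals `addNode μ (y + 1)`. -/
def remNode (μ : YoungDiagram) (y : ℕ) : K := qtNode (μ.rowLen y) (y + 1)

theorem prod_range_brk_div_brk (h : μ.Addable r) :
    ∏ x ∈ range (μ.rowLen r), brk (μ.rowLen r - (x + 1)) (μ.colLen x - r) /
        brk (μ.rowLen r - x) (μ.colLen x - r) =
      ∏ y ∈ Ico r (μ.colLen 0),
        (1 - μ.addNode r / μ.remNode y) / (1 - μ.addNode r / μ.addNode (y + 1)) := by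
  rw [prod_range_eq_prod_Ico_prod_Ico _ (fun _ _ => μ.rowLen_anti _ _) h.le_colLen_zero
    μ.rowLen_colLen_zero]
  refine prod_congr rfl fun y hy => ?_
  have hy := mem_Ico.1 hy
  -- the columns `μ_{y+1} ≤ x < μ_y` all have length `y + 1`, so the product over them telescopes
  rw [prod_congr rfl fun x hx => by rw [colLen_eq_succ (mem_Ico.1 hx).1 (mem_Ico.1 hx).2],
    prod_Ico_div_of_ne_zero (f := fun x => brk (μ.rowLen r - x) (y + 1 - r))
      (fun _ => brk_ne_zero (by omega)) (μ.rowLen_anti _ _ (Nat.le_succ y)),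
    brk_sub_sub (μ.rowLen_anti _ _ hy.1) (by omega),
    brk_sub_sub (μ.rowLen_anti _ _ (by omega)) (by omega)]
  rfl

theorem t_pow_mul_prod_range_brk_div_brk (h : μ.Addable r) :
    t ^ r * ∏ y ∈ range r, brk (μ.rowLen y - μ.rowLen r) (r - (y + 1)) /
        brk (μ.rowLen y - μ.rowLen r) (r - y) =
      ∏ y ∈ range r, (1 - μ.addNode r / μ.remNode y) / (1 - μ.addNode r / μ.addNode y) := by
  rw [pow_eq_prod_const, ← prod_mul_distrib]
  exact prod_congr rfl fun y hy =>
    t_mul_brk_div_brk (h.rowLen_lt (mem_range.1 hy)).le (mem_range.1 hy)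

theorem t_pow_mul_alph_addCell (h : μ.Addable r) :
    t ^ r * alph μ (μ.addCell r) =
      (∏ y ∈ range (μ.colLen 0), (1 - μ.addNode r / μ.remNode y)) /
        ∏ ρ ∈ (range (μ.colLen 0 + 1)).erase r, (1 - μ.addNode r / μ.addNode ρ) := by
  rw [alph_addCell h, mul_left_comm, t_pow_mul_prod_range_brk_div_brk h,
    prod_range_brk_div_brk h, prod_div_distrib, prod_div_distrib, div_mul_div_comm,
    mul_comm, prod_range_mul_prod_Ico _ h.le_colLen_zero, mul_comm (∏ y ∈ Ico _ _, _),
    prod_erase_range_succ _ h.le_colLen_zero]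

theorem prod_one_sub_addNode_div_remNode_eq_zero (hr : r ≤ μ.colLen 0) (h : ¬ μ.Addable r) :
    ∏ y ∈ range (μ.colLen 0), (1 - μ.addNode r / μ.remNode y) = 0 := by
  simp only [Addable, not_or, not_lt] at h
  refine prod_eq_zero (i := r - 1) (mem_range.2 (by omega)) ?_
  rw [remNode, Nat.sub_add_cancel (Nat.pos_of_ne_zero h.1),
    le_antisymm h.2 (μ.rowLen_anti _ _ (Nat.sub_le r 1)), addNode, div_self (qtNode_ne_zero _ _),
    sub_self]

theorem sum_addableRows_t_pow_mul_alph (μ : YoungDiagram) :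
    ∑ r ∈ μ.addableRows, t ^ r * alph μ (μ.addCell r) = 1 := by
  have hinj : Set.InjOn μ.addNode (range (μ.colLen 0 + 1)) := fun _ _ _ _ h => (qtNode_inj.1 h).2
  rw [← Lagrange.sum_prod_one_sub_div_div_prod_one_sub_div_eq_one hinj
    (fun _ _ => qtNode_ne_zero _ _) (range (μ.colLen 0)) μ.remNode (by simp), addableRows,
    sum_filter]
  refine sum_congr rfl fun r hr => ?_
  split_ifs with h
  · exact t_pow_mul_alph_addCell h
  · rw [prod_one_sub_addNode_div_remNode_eq_zero (Nat.lt_succ_iff.1 (mem_range.1 hr)) h, zero_div]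

end YoungDiagram

open YoungDiagram

def extendChain (n : ℕ) (P : ℕ → YoungDiagram) (ν : YoungDiagram) : ℕ → YoungDiagram :=
  fun i => if i ≤ n then P i else ν

section extendChain

variable {n : ℕ} {P : ℕ → YoungDiagram} {ν : YoungDiagram}

theorem extendChain_of_le {i : ℕ} (hi : i ≤ n) : extendChain n P ν i = P i := if_pos hi

theorem extendChain_of_lt {i : ℕ} (hi : n < i) : extendChain n P ν i = ν := if_neg hi.not_ge

theorem extendChain_extendChain (ν' : YoungDiagram) :
    extendChain n (extendChain n P ν') ν = extendChain n P ν := by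
  funext i
  simp only [extendChain]
  split_ifs <;> rfl

theorem extendChain_eq_self (h : ∀ i, n < i → P i = ν) : extendChain n P ν = P := by
  funext i
  rcases le_or_gt i n with hi | hi
  · exact extendChain_of_le hi
  · exact (extendChain_of_lt hi).trans (h i hi).symm

end extendChain

namespace IsSYTChain

variable {n : ℕ} {l : YoungDiagram} {P : ℕ → YoungDiagram}

theorem card_cells (hP : IsSYTChain n l P) {i : ℕ} (hi : i ≤ n) : #(P i).cells = i := by
  induction i with
  | zero => rw [hP.1, card_empty]
  | succ i ih => rw [(hP.2.1 i hi).2, ih (by omega)]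

theorem extend (hP : IsSYTChain n l P) {ν : YoungDiagram} (h : Covers l ν) :
    IsSYTChain (n + 1) ν (extendChain n P ν) := by
  refine ⟨by rw [extendChain_of_le (Nat.zero_le n), hP.1], fun i hi => ?_,
    fun i hi => extendChain_of_lt hi⟩
  rw [extendChain_of_le (Nat.lt_succ_iff.1 hi)]
  rcases (Nat.lt_succ_iff.1 hi).lt_or_eq with hi | rfl
  · rw [extendChain_of_le hi]
    exact hP.2.1 i hi
  · rw [extendChain_of_lt (Nat.lt_succ_self i), hP.2.2 i le_rfl]
    exact h

theorem truncate (hP : IsSYTChain (n + 1) l P) : IsSYTChain n (P n) (extendChain n P (P n)) := by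
  refine ⟨by rw [extendChain_of_le (Nat.zero_le n), hP.1], fun i hi => ?_, fun i hi => ?_⟩
  · rw [extendChain_of_le hi.le, extendChain_of_le hi]
    exact hP.2.1 i (by omega)
  · rcases hi.lt_or_eq with hi | rfl
    · exact extendChain_of_lt hi
    · exact extendChain_of_le le_rfl

theorem eq_of_extendChain_eq {l' : YoungDiagram} {Q : ℕ → YoungDiagram} {ν ν' : YoungDiagram}
    (hP : IsSYTChain n l P) (hQ : IsSYTChain n l' Q)
    (h : extendChain n P ν = extendChain n Q ν') : P = Q := by
  have hle : ∀ i ≤ n, P i = Q i := fun i hi => by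
    simpa only [extendChain_of_le hi] using congrFun h i
  funext i
  rcases le_or_gt i n with hi | hi
  · exact hle i hi
  · rw [hP.2.2 i hi.le, hQ.2.2 i hi.le, ← hP.2.2 n le_rfl, ← hQ.2.2 n le_rfl, hle n le_rfl]

end IsSYTChain

open scoped Classical in
def sytChains : ℕ → Finset (ℕ → YoungDiagram)
  | 0 => {fun _ => ⊥}
  | n + 1 => (sytChains n).biUnion fun P =>
      (P n).addableRows.image fun r => extendChain n P ((P n).addCell r)

theorem mem_sytChains {n : ℕ} {P : ℕ → YoungDiagram} :
    P ∈ sytChains n ↔ IsSYTChain n (P n) P := by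
  induction n generalizing P with
  | zero =>
    rw [sytChains, mem_singleton]
    constructor
    · rintro rfl
      exact ⟨cells_bot, fun i hi => absurd hi (Nat.not_lt_zero i), fun _ _ => rfl⟩
    · intro hP
      funext i
      rw [hP.2.2 i (Nat.zero_le i)]
      exact YoungDiagram.ext (hP.1.trans cells_bot.symm)
  | succ n ih =>
    simp only [sytChains, mem_biUnion, mem_image, mem_addableRows, ih]
    constructor
    · rintro ⟨Q, hQ, r, hr, rfl⟩
      rw [extendChain_of_lt (Nat.lt_succ_self n)]
      exact hQ.extend (covers_addCell hr)
    · intro hP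
      obtain ⟨r, hr, hPr⟩ := exists_addable_of_covers (hP.2.1 n (Nat.lt_succ_self n))
      refine ⟨extendChain n P (P n), ?_, r, ?_, ?_⟩
      · simpa only [extendChain_of_le le_rfl] using hP.truncate
      · simpa only [extendChain_of_le le_rfl] using hr
      · rw [extendChain_of_le le_rfl, ← hPr, extendChain_extendChain]
        exact extendChain_eq_self fun i hi => (hP.2.2 i hi).trans (hP.2.2 (n + 1) le_rfl).symm

theorem sum_sytChains_succ {M : Type*} [AddCommMonoid M] (n : ℕ) (f : (ℕ → YoungDiagram) → M) :
    ∑ P ∈ sytChains (n + 1), f P =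
      ∑ P ∈ sytChains n, ∑ r ∈ (P n).addableRows, f (extendChain n P ((P n).addCell r)) := by
  classical
  rw [sytChains, sum_biUnion]
  · refine sum_congr rfl fun P _ => sum_image fun r hr r' hr' h => ?_
    have := congrFun h (n + 1)
    simp only [extendChain_of_lt (Nat.lt_succ_self n)] at this
    exact addCell_injOn (mem_addableRows.1 hr) (mem_addableRows.1 hr') this
  · intro P hP Q hQ hPQ
    simp only [Function.onFun, disjoint_left, mem_image, not_exists, not_and]
    rintro _ ⟨r, -, rfl⟩ r' - h
    exact hPQ ((mem_sytChains.1 hQ).eq_of_extendChain_eq (mem_sytChains.1 hP) h).symm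

def chainWeight (n : ℕ) (P : ℕ → YoungDiagram) : K :=
  t ^ nstat (P n) * ∏ i ∈ range n, alph (P i) (P (i + 1))

theorem chainWeight_extendChain_addCell {n r : ℕ} {P : ℕ → YoungDiagram} (h : (P n).Addable r) :
    chainWeight (n + 1) (extendChain n P ((P n).addCell r)) =
      t ^ r * alph (P n) ((P n).addCell r) * chainWeight n P := by
  rw [chainWeight, chainWeight, prod_range_succ, extendChain_of_lt (Nat.lt_succ_self n),
    extendChain_of_le le_rfl, nstat_addCell h, zpow_add₀ t_ne_zero, zpow_natCast,
    prod_congr rfl fun i hi => by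
      rw [extendChain_of_le (mem_range.1 hi).le, extendChain_of_le (mem_range.1 hi)]]
  ring

theorem sum_sytChains_chainWeight (n : ℕ) : ∑ P ∈ sytChains n, chainWeight n P = 1 := by
  induction n with
  | zero => simp [sytChains, chainWeight, nstat]
  | succ n ih =>
    rw [sum_sytChains_succ, ← ih]
    refine sum_congr rfl fun P _ => ?_
    rw [sum_congr rfl fun r hr => chainWeight_extendChain_addCell (mem_addableRows.1 hr),
      ← sum_mul, sum_addableRows_t_pow_mul_alph, one_mul]

open scoped Classical in
theorem setOf_isSYTChain (n : ℕ) (l : YoungDiagram) :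
    {P | IsSYTChain n l P} = ↑{P ∈ sytChains n | P n = l} := by
  ext P
  simp only [Set.mem_ofPred_eq, coe_filter, mem_sytChains]
  exact ⟨fun hP => ⟨(hP.2.2 n le_rfl).symm ▸ hP, hP.2.2 n le_rfl⟩, fun ⟨hP, hl⟩ => hl ▸ hP⟩

/-- For every `n ≥ 0`:
`∑_{λ ⊢ n} ∑_{P ∈ SYT(λ)} t^{n(λ)} ∏_{i=1}^{n} α_{P^{(i)}/P^{(i−1)}}(q,t) = 1` in `ℚ(q,t)`. -/
theorem qPlancherel_total_mass (n : ℕ) :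
    ∑ᶠ l ∈ {l : YoungDiagram | l.cells.card = n},
        ∑ᶠ P ∈ {P : ℕ → YoungDiagram | IsSYTChain n l P},
          t ^ (nstat l) * ∏ i ∈ Finset.range n, alph (P i) (P (i + 1)) = 1 := by
  classical
  calc _ = ∑ᶠ l ∈ {l : YoungDiagram | #l.cells = n},
        ∑ P ∈ sytChains n with P n = l, chainWeight n P := by
        refine finsum_mem_congr rfl fun l _ => ?_
        rw [setOf_isSYTChain, finsum_mem_coe_finset]
        exact sum_congr rfl fun P hP => by rw [chainWeight, (mem_filter.1 hP).2]
    _ = ∑ l ∈ (sytChains n).image (· n), ∑ P ∈ sytChains n with P n = l, chainWeight n P := by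
        refine finsum_mem_eq_sum_of_subset _ (fun l ⟨_, hl⟩ => ?_) fun l hl => ?_
        · obtain ⟨P, hP⟩ := nonempty_of_sum_ne_zero hl
          exact mem_image.2 ⟨P, (mem_filter.1 hP).1, (mem_filter.1 hP).2⟩
        · obtain ⟨P, hP, rfl⟩ := mem_image.1 hl
          exact (mem_sytChains.1 hP).card_cells le_rfl
    _ = ∑ P ∈ sytChains n, chainWeight n P :=
        sum_fiberwise_of_maps_to (fun P hP => mem_image_of_mem _ hP) _
    _ = 1 := sum_sytChains_chainWeight n

end
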